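/- Let φ(u) be a monic polynomial of degree m over CZ_n whose scalar-part polynomial f = ⟨φ⟩_0 has m distinct simple complex zeros. Then φ has exactly m zeros in CZ_n. -/

import Mathlib

noncomputable section

/-- The ideal of squares of generators defining the zeon algebra. -/
def zeonIdeal (n : ℕ) : Ideal (MvPolynomial (Fin n) ℂ) :=
  Ideal.span (Set.range fun i : Fin n => (MvPolynomial.X i : MvPolynomial (Fin n) ℂ) ^ 2)

/-- The `n`-particle complex zeon algebra `CZ_n`. -/
abbrev Zeon (n : ℕ) := MvPolynomial (Fin n) ℂ ⧸ zeonIdeal n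

/-- The scalar part `⟨u⟩₀` of a zeon, as a `ℂ`-algebra homomorphism. -/
def scalarPart (n : ℕ) : Zeon n →ₐ[ℂ] ℂ :=
  Ideal.Quotient.liftₐ (zeonIdeal n) (MvPolynomial.aeval fun _ => (0 : ℂ)) (by
    intro a ha
    have h : zeonIdeal n ≤ RingHom.ker
        (MvPolynomial.aeval (R := ℂ) fun _ : Fin n => (0 : ℂ)).toRingHom := by
      rw [zeonIdeal, Ideal.span_le]
      rintro _ ⟨i, rfl⟩
      simp [RingHom.mem_ker]
    exact h ha)

/-- The dual (nilpotent) part `Du = u - ⟨u⟩₀`. -/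
def dualPart (n : ℕ) (u : Zeon n) : Zeon n := u - algebraMap ℂ (Zeon n) (scalarPart n u)

/-- The generator `ζ_i`. -/
def zeta (n : ℕ) (i : Fin n) : Zeon n := Ideal.Quotient.mk _ (MvPolynomial.X i)

/-- The basis blade `ζ_I`. -/
def blade (n : ℕ) (I : Finset (Fin n)) : Zeon n :=
  Ideal.Quotient.mk _ (∏ i ∈ I, MvPolynomial.X i)

/-!
Let `σ : R →ₐ[K] K` be a character of a commutative `K`-algebra whose kernel is nil, such as the
scalar part on `CZ_n`. Then `σ` detects units, and two elements have the same image under `σ`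
iff they differ by a nilpotent. Newton's iteration
(`Polynomial.existsUnique_nilpotent_sub_and_aeval_eq_zero`) started at the constant `c` therefore
lifts each simple root `c` of `φ.map σ` to exactly one root of `φ` lying over it, while every
root of `φ` lies over a root of `φ.map σ`. So `σ` maps the roots of `φ` bijectively onto those
of `φ.map σ` once the latter is separable, and over `ℂ` having `deg φ` distinct roots is
separability.
-/

open Polynomial

section NilKernel

variable {K R : Type*} [Field K] [CommRing R] [Algebra K R] {σ : R →ₐ[K] K}

theorem isNilpotent_sub_iff_of_ker_isNilpotent (hσ : ∀ x, σ x = 0 → IsNilpotent x) {x y : R} :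
    IsNilpotent (x - y) ↔ σ x = σ y := by
  refine ⟨fun h => ?_, fun h => hσ _ (by rw [map_sub, h, sub_self])⟩
  rw [← sub_eq_zero, ← map_sub, ← isNilpotent_iff_eq_zero]
  exact h.map σ

theorem isUnit_of_ker_isNilpotent (hσ : ∀ x, σ x = 0 → IsNilpotent x) {x : R} (hx : σ x ≠ 0) :
    IsUnit x := by
  have hnil : IsNilpotent (x - algebraMap K R (σ x)) :=
    (isNilpotent_sub_iff_of_ker_isNilpotent hσ).2 (σ.commutes _).symm
  have hunit : IsUnit (algebraMap K R (σ x)) := (isUnit_iff_ne_zero.2 hx).map _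
  simpa using hnil.isUnit_add_left_of_commute hunit (Commute.all _ _)

theorem eval_map_toRingHom_apply (φ : R[X]) (u : R) :
    (φ.map σ.toRingHom).eval (σ u) = σ (φ.eval u) :=
  eval_map_apply σ.toRingHom u

theorem existsUnique_eval_eq_zero_and_map_eq (hσ : ∀ x, σ x = 0 → IsNilpotent x) (φ : R[X])
    {c : K} (hc : (φ.map σ.toRingHom).IsRoot c)
    (hc' : (φ.map σ.toRingHom).derivative.eval c ≠ 0) :
    ∃! u, φ.eval u = 0 ∧ σ u = c := by
  have hx : σ (algebraMap K R c) = c := σ.commutes c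
  have hnil : IsNilpotent (aeval (algebraMap K R c) φ) := by
    refine hσ _ ?_
    rwa [coe_aeval_eq_eval, ← eval_map_toRingHom_apply, hx]
  have hunit : IsUnit (aeval (algebraMap K R c) (derivative φ)) := by
    refine isUnit_of_ker_isNilpotent hσ ?_
    rwa [coe_aeval_eq_eval, ← eval_map_toRingHom_apply, hx, ← derivative_map]
  simpa only [coe_aeval_eq_eval, isNilpotent_sub_iff_of_ker_isNilpotent hσ, hx, eq_comm,
    and_comm] using existsUnique_nilpotent_sub_and_aeval_eq_zero hnil hunit

theorem ncard_setOf_eval_eq_zero [DecidableEq K] (hσ : ∀ x, σ x = 0 → IsNilpotent x) {φ : R[X]}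
    (hsep : (φ.map σ.toRingHom).Separable) :
    {u | φ.eval u = 0}.ncard = (φ.map σ.toRingHom).roots.toFinset.card := by
  set f := φ.map σ.toRingHom
  have hlift : ∀ c ∈ f.roots.toFinset, ∃! u, φ.eval u = 0 ∧ σ u = c := fun c hc =>
    have hc : f.IsRoot c := isRoot_of_mem_roots (Multiset.mem_toFinset.1 hc)
    existsUnique_eval_eq_zero_and_map_eq hσ φ hc (hsep.eval₂_derivative_ne_zero _ hc)
  have hmaps : Set.MapsTo σ {u | φ.eval u = 0} f.roots.toFinset := fun u (hu : φ.eval u = 0) => by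
    rw [Finset.mem_coe, Multiset.mem_toFinset, mem_roots hsep.ne_zero, IsRoot,
      eval_map_toRingHom_apply, hu, map_zero]
  have hbij : Set.BijOn σ {u | φ.eval u = 0} f.roots.toFinset := by
    refine ⟨hmaps, fun u hu v hv huv => ?_, fun c hc => ?_⟩
    · exact (hlift _ (hmaps hu)).unique ⟨hu, rfl⟩ ⟨hv, huv.symm⟩
    · obtain ⟨u, hu, -⟩ := hlift c hc
      exact ⟨u, hu⟩
  rw [hbij.ncard_eq, Set.ncard_coe_finset]

end NilKernel

theorem zeta_sq (n : ℕ) (i : Fin n) : zeta n i ^ 2 = 0 := by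
  rw [zeta, ← map_pow, Ideal.Quotient.eq_zero_iff_mem]
  exact Ideal.subset_span ⟨i, rfl⟩

theorem scalarPart_mk (n : ℕ) (p : MvPolynomial (Fin n) ℂ) :
    scalarPart n (Ideal.Quotient.mk _ p) = MvPolynomial.aeval (fun _ => (0 : ℂ)) p :=
  rfl

theorem isNilpotent_dualPart (n : ℕ) (u : Zeon n) : IsNilpotent (dualPart n u) := by
  obtain ⟨p, rfl⟩ := Ideal.Quotient.mk_surjective u
  induction p using MvPolynomial.induction_on with
  | C a =>
    rw [← MvPolynomial.algebraMap_eq, Ideal.Quotient.mk_algebraMap]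
    simp [dualPart]
  | add p q hp hq =>
    have hadd : dualPart n (Ideal.Quotient.mk _ (p + q)) =
        dualPart n (Ideal.Quotient.mk _ p) + dualPart n (Ideal.Quotient.mk _ q) := by
      simp only [dualPart, map_add]
      ring
    rw [hadd]
    exact (Commute.all _ _).isNilpotent_add hp hq
  | mul_X p i =>
    have hmul : dualPart n (Ideal.Quotient.mk _ (p * MvPolynomial.X i)) =
        Ideal.Quotient.mk _ p * zeta n i := by
      simp [dualPart, zeta, scalarPart_mk]
    rw [hmul]
    exact (Commute.all _ _).isNilpotent_mul_left ⟨2, zeta_sq n i⟩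

theorem isNilpotent_of_scalarPart_eq_zero (n : ℕ) (u : Zeon n) (hu : scalarPart n u = 0) :
    IsNilpotent u := by
  simpa [dualPart, hu] using isNilpotent_dualPart n u

/-- if the scalar-part polynomial of a monic degree-`m` zeon polynomial
has `m` distinct (hence simple) complex zeros, then `φ` has exactly `m` zeon zeros. -/
theorem stmt18 (n : ℕ) (m : ℕ) (φ : Polynomial (Zeon n)) (hmonic : φ.Monic)
    (hdeg : φ.natDegree = m)
    (hroots : (φ.map (scalarPart n).toRingHom).roots.toFinset.card = m) :
    {u : Zeon n | φ.eval u = 0}.ncard = m := by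
  set f := φ.map (scalarPart n).toRingHom
  have hnodup : f.roots.Nodup := by
    rw [← Multiset.toFinset_card_eq_card_iff_nodup]
    refine le_antisymm (Multiset.toFinset_card_le _) ?_
    rw [hroots, ← hdeg]
    exact (card_roots' f).trans natDegree_map_le
  have hsep : f.Separable :=
    (nodup_roots_iff_of_splits (hmonic.map _).ne_zero (IsAlgClosed.splits f)).1 hnodup
  rw [ncard_setOf_eval_eq_zero (isNilpotent_of_scalarPart_eq_zero n) hsep, hroots]
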